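/- Fix integers m ≥ 2 and A ≥ 1 and a real number ε > 0. There exists Q₀ ≥ 1 such that for all finite fields K ⊆ L with |K| = q ≥ Q₀ and [L : K] = m, and for every character χ₀ of Kˣ, the following holds: the number of characters θ of Lˣ in general position with θ|_{Kˣ} = χ₀ and [ℚ(θ) : ℚ] ≤ mA is at most ε times the number of characters θ of Lˣ in general position with θ|_{Kˣ} = χ₀. -/

import Mathlib

/-- A character `θ` of `Lˣ` is in *general position* (over `K`) if there is no proper
intermediate field `K ⊆ E ⊊ L` and character `θ'` of `Eˣ` with `θ = θ' ∘ N_{L/E}`,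
where `N_{L/E} : Lˣ → Eˣ` is the norm map. -/
def IsGeneralPosition (K : Type) {L : Type} [Field K] [Field L] [Algebra K L]
    (θ : Lˣ →* ℂˣ) : Prop :=
  ¬ ∃ (E : IntermediateField K L) (_ : E ≠ ⊤) (θ' : (↥E)ˣ →* ℂˣ),
      θ = θ'.comp (Units.map (Algebra.norm (↥E) : L →* ↥E))

/-- The restriction of a character `θ : Lˣ →* ℂˣ` to `Kˣ`. -/
noncomputable def charRestrict (K : Type) {L : Type} [Field K] [Field L] [Algebra K L]
    (θ : Lˣ →* ℂˣ) : Kˣ →* ℂˣ :=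
  θ.comp (Units.map (algebraMap K L : K →* L))

/-- `[ℚ(θ) : ℚ]`: the degree over `ℚ` of the subfield of `ℂ` generated by the values
of a character `θ`. -/
noncomputable def charDegree {G : Type*} [Group G] (θ : G →* ℂˣ) : ℕ :=
  Module.finrank ℚ ↥(IntermediateField.adjoin ℚ (Set.range fun g => ((θ g : ℂˣ) : ℂ)))

/-!
The characters of `Lˣ` form a cyclic group of order `q ^ m - 1`. The norm `Lˣ → Kˣ` is onto
and equals `x ↦ x ^ d` with `d = 1 + q + ⋯ + q ^ (m - 1)`, so `θ|_{Kˣ} = χ₀` says exactly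
`θ ^ d = χ₀ ∘ N`, which has `d ≥ q ^ (m - 1)` solutions. A solution not in general position
factors through `Eˣ` with `[E : K] = e` a proper divisor of `m`, hence `θ ^ (q ^ e - 1) = 1`;
there are at most `gcd d (q ^ e - 1) ≤ (m / e) (1 + ⋯ + q ^ (e - 1))` of those, few against `d`.
On the other side, a value of `θ` of order `n` generates `ℚ(ζₙ)`, of degree `φ n`, and
`φ n ≤ D` forces `n ∣ (2 D)!`: at most `(2 m A)!` characters have `[ℚ(θ) : ℚ] ≤ m A`,
whatever `q` is.
-/

open Finset Module Nat

theorem Nat.dvd_factorial_two_mul_of_totient_le {n D : ℕ} (hn : 0 < n) (h : φ n ≤ D) :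
    n ∣ (2 * D)! := by
  refine (Nat.dvd_iff_prime_pow_dvd_dvd _ _).2 fun p k hp hpk => ?_
  rcases k with _ | k
  · simp
  have hφ : p ^ k * (p - 1) ≤ D := by
    rw [← Nat.totient_prime_pow_succ hp]
    exact (Nat.le_of_dvd (Nat.totient_pos.2 hn) (Nat.totient_dvd_of_dvd hpk)).trans h
  refine Nat.dvd_factorial (pow_pos hp.pos _) ?_
  have := hp.two_le
  calc p ^ (k + 1) = p ^ k * p := pow_succ _ _
    _ ≤ p ^ k * (2 * (p - 1)) := Nat.mul_le_mul_left _ (by omega)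
    _ ≤ 2 * D := by rw [mul_left_comm]; exact Nat.mul_le_mul_left 2 hφ

theorem Nat.geomSum_range_mul_modEq {q : ℕ} (hq : 0 < q) (e f : ℕ) :
    ∑ i ∈ range (e * f), q ^ i ≡ f * ∑ i ∈ range e, q ^ i [MOD q ^ e - 1] := by
  have hqe : q ^ e ≡ 1 [MOD q ^ e - 1] := Nat.modEq_sub (Nat.one_le_pow _ _ hq)
  induction f with
  | zero => simp [Nat.ModEq]
  | succ f ih =>
    rw [Nat.mul_succ, sum_range_add, add_mul, one_mul]
    simp_rw [pow_add, ← mul_sum, pow_mul]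
    exact ih.add (by simpa using (hqe.pow f).mul_right (∑ i ∈ range e, q ^ i))

theorem Nat.gcd_geomSum_pow_sub_one_le {q m e : ℕ} (hq : 0 < q) (he : e ∈ m.properDivisors) :
    Nat.gcd (∑ i ∈ range m, q ^ i) (q ^ e - 1) ≤ m * ∑ i ∈ range (m - 1), q ^ i := by
  obtain ⟨⟨f, rfl⟩, hlt⟩ := Nat.mem_properDivisors.1 he
  have hf : 0 < f := Nat.pos_of_ne_zero (by rintro rfl; simp at hlt)
  have he0 : 0 < e := Nat.pos_of_ne_zero (by rintro rfl; simp at hlt)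
  rw [(Nat.geomSum_range_mul_modEq hq e f).gcd_eq]
  calc _ ≤ f * ∑ i ∈ range e, q ^ i :=
        Nat.gcd_le_left _ (Nat.mul_pos hf (sum_pos (fun i _ => by positivity)
          (nonempty_range_iff.2 he0.ne')))
    _ ≤ e * f * ∑ i ∈ range (e * f - 1), q ^ i := by
        gcongr
        · exact Nat.le_mul_of_pos_left f he0
        · omega

theorem MonoidHom.card_fiber_le_card_ker {G H : Type*} [Group G] [Fintype G] [Monoid H]
    [DecidableEq H] (f : G →* H) (y : H) : #{x | f x = y} ≤ #{x | f x = 1} := by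
  by_cases hy : y ∈ Set.range f
  · exact (MonoidHom.card_fiber_eq_of_mem_range f hy ⟨1, map_one f⟩).le
  · rw [card_eq_zero.2 (filter_eq_empty_iff.2 fun x _ hx => hy ⟨x, hx⟩)]
    exact Nat.zero_le _

namespace IsCyclic

variable {G : Type*} [CommGroup G] [Fintype G] [IsCyclic G]

theorem exists_pow_eq {c d : ℕ} (hcd : Fintype.card G = d * c) {ψ : G} (hψ : ψ ^ c = 1) :
    ∃ θ : G, θ ^ d = ψ := by
  have hd : 0 < d := Nat.pos_of_mul_pos_right (hcd ▸ Fintype.card_pos)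
  have hle : (powMonoidHom d : G →* G).range ≤ (powMonoidHom c).ker := by
    rintro _ ⟨θ, rfl⟩
    simp [← pow_mul, ← hcd, pow_card_eq_one]
  have hcard : Nat.card (powMonoidHom c : G →* G).ker ≤
      Nat.card (powMonoidHom d : G →* G).range := by
    rw [card_powMonoidHom_ker, card_powMonoidHom_range, Nat.card_eq_fintype_card, hcd,
      Nat.gcd_eq_right (dvd_mul_right d c), Nat.mul_div_cancel_left _ hd]
    exact Nat.gcd_le_right _ (Nat.pos_of_mul_pos_left (hcd ▸ Fintype.card_pos))
  have hψker : ψ ∈ (powMonoidHom c : G →* G).ker := hψ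
  rw [← Subgroup.eq_of_le_of_card_ge hle hcard] at hψker
  exact hψker

variable [DecidableEq G]

theorem card_pow_eq_one_of_dvd {d : ℕ} (hd : d ∣ Fintype.card G) :
    #{x : G | x ^ d = 1} = d := by
  rw [← Fintype.card_subtype, ← Nat.card_eq_fintype_card]
  exact (card_powMonoidHom_ker G d).trans
    (Nat.card_eq_fintype_card (α := G) ▸ Nat.gcd_eq_right hd)

theorem card_pow_eq {c d : ℕ} (hcd : Fintype.card G = d * c) {ψ : G} (hψ : ψ ^ c = 1) :
    #{x : G | x ^ d = ψ} = d := by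
  obtain ⟨θ, rfl⟩ := exists_pow_eq hcd hψ
  calc #{x : G | x ^ d = θ ^ d} = #{x : G | x ^ d = 1} :=
        MonoidHom.card_fiber_eq_of_mem_range (powMonoidHom d) ⟨θ, rfl⟩ ⟨1, one_pow d⟩
    _ = d := card_pow_eq_one_of_dvd (Dvd.intro c hcd.symm)

theorem card_pow_eq_and_pow_eq_one_le {d : ℕ} (hd : 0 < d) (ψ : G) (n : ℕ) :
    #{x : G | x ^ d = ψ ∧ x ^ n = 1} ≤ d.gcd n := by
  let f : G →* G × G := (powMonoidHom d).prod (powMonoidHom n)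
  calc #{x : G | x ^ d = ψ ∧ x ^ n = 1} = #{x | f x = (ψ, 1)} := by simp [f, Prod.ext_iff]
    _ ≤ #{x | f x = 1} := f.card_fiber_le_card_ker _
    _ = #{x : G | x ^ d.gcd n = 1} := by simp [f, Prod.ext_iff, pow_gcd_eq_one]
    _ ≤ d.gcd n := card_pow_eq_one_le (Nat.gcd_pos_of_pos_left n hd)

end IsCyclic

section Characters

variable {G : Type*}

theorem card_monoidHom_units_complex [CommGroup G] [Finite G] :
    Nat.card (G →* ℂˣ) = Nat.card G :=
  have : NeZero (Monoid.exponent G) := ⟨Monoid.exponent_ne_zero_of_finite⟩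
  CommGroup.card_monoidHom_of_hasEnoughRootsOfUnity G ℂ

instance isCyclic_monoidHom_units_complex [CommGroup G] [Finite G] [IsCyclic G] :
    IsCyclic (G →* ℂˣ) :=
  have : NeZero (Monoid.exponent G) := ⟨Monoid.exponent_ne_zero_of_finite⟩
  let e := (CommGroup.monoidHom_mulEquiv_of_hasEnoughRootsOfUnity G ℂ).some
  isCyclic_of_surjective e.symm e.symm.surjective

variable [Group G] [Finite G]

theorem totient_orderOf_le_charDegree (θ : G →* ℂˣ) (x : G) :
    φ (orderOf (θ x)) ≤ charDegree θ := by
  set S := Set.range fun g => ((θ g : ℂˣ) : ℂ)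
  have hint : ∀ y ∈ S, IsIntegral ℚ y := by
    rintro _ ⟨g, rfl⟩
    refine IsIntegral.of_pow (Nat.card_pos (α := G)) ?_
    rw [← Units.val_pow_eq_pow_val, ← map_pow, pow_card_eq_one', map_one, Units.val_one]
    exact isIntegral_one
  have := IntermediateField.finiteDimensional_adjoin hint
  have hmem : ((θ x : ℂˣ) : ℂ) ∈ IntermediateField.adjoin ℚ S :=
    IntermediateField.subset_adjoin ℚ S ⟨x, rfl⟩
  have hprim : IsPrimitiveRoot ((θ x : ℂˣ) : ℂ) (orderOf (θ x)) := by
    rw [← orderOf_units]; exact IsPrimitiveRoot.orderOf _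
  have hpos : 0 < orderOf (θ x) := orderOf_pos_iff.2 (θ.isOfFinOrder (isOfFinOrder_of_finite x))
  calc φ (orderOf (θ x)) = (minpoly ℚ ((θ x : ℂˣ) : ℂ)).natDegree := by
        rw [← Polynomial.cyclotomic_eq_minpoly_rat hprim hpos, Polynomial.natDegree_cyclotomic]
    _ = (minpoly ℚ (⟨_, hmem⟩ : IntermediateField.adjoin ℚ S)).natDegree :=
        congr_arg _ (IntermediateField.minpoly_eq ⟨_, hmem⟩).symm
    _ ≤ charDegree θ := minpoly.natDegree_le _

theorem pow_factorial_eq_one_of_charDegree_le {θ : G →* ℂˣ} {D : ℕ}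
    (h : charDegree θ ≤ D) : θ ^ (2 * D)! = 1 := by
  refine MonoidHom.ext fun x => ?_
  rw [MonoidHom.pow_apply, MonoidHom.one_apply, ← orderOf_dvd_iff_pow_eq_one]
  exact Nat.dvd_factorial_two_mul_of_totient_le
    (orderOf_pos_iff.2 (θ.isOfFinOrder (isOfFinOrder_of_finite x)))
    ((totient_orderOf_le_charDegree θ x).trans h)

end Characters

theorem card_charDegree_le_le_factorial {G : Type*} [CommGroup G] [Finite G] [IsCyclic G]
    (D : ℕ) : Nat.card {θ : G →* ℂˣ // charDegree θ ≤ D} ≤ (2 * D)! := by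
  classical
  have := Fintype.ofFinite (G →* ℂˣ)
  rw [Nat.card_eq_fintype_card, Fintype.card_subtype]
  calc #{θ : G →* ℂˣ | charDegree θ ≤ D} ≤ #{θ : G →* ℂˣ | θ ^ (2 * D)! = 1} :=
        card_le_card (monotone_filter_right _ fun _ _ => pow_factorial_eq_one_of_charDegree_le)
    _ ≤ (2 * D)! := IsCyclic.card_pow_eq_one_le (α := G →* ℂˣ) (Nat.factorial_pos _)

section FiniteField

variable {K L : Type} [Field K] [Field L] [Algebra K L] [Finite L]

theorem charRestrict_comp_norm (θ : Lˣ →* ℂˣ) :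
    (charRestrict K θ).comp (Units.map (Algebra.norm K : L →* K)) =
      θ ^ ∑ i ∈ range (finrank K L), Nat.card K ^ i := by
  refine MonoidHom.ext fun x => ?_
  have : Units.map (algebraMap K L : K →* L) (Units.map (Algebra.norm K : L →* K) x) =
      x ^ ∑ i ∈ range (finrank K L), Nat.card K ^ i :=
    Units.ext (FiniteField.algebraMap_norm_eq_pow_sum K L (x : L))
  simp [charRestrict, this]

theorem charRestrict_eq_iff {θ : Lˣ →* ℂˣ} {χ : Kˣ →* ℂˣ} :
    charRestrict K θ = χ ↔ θ ^ ∑ i ∈ range (finrank K L), Nat.card K ^ i =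
      χ.comp (Units.map (Algebra.norm K)) := by
  rw [← charRestrict_comp_norm, MonoidHom.cancel_right (FiniteField.unitsMap_norm_surjective K L)]

theorem exists_pow_eq_one_of_not_isGeneralPosition {θ : Lˣ →* ℂˣ}
    (hθ : ¬ IsGeneralPosition K θ) :
    ∃ e ∈ (finrank K L).properDivisors, θ ^ (Nat.card K ^ e - 1) = 1 := by
  obtain ⟨E, hE, θ', rfl⟩ := not_not.1 hθ
  have hEL : finrank K E * finrank E L = finrank K L := finrank_mul_finrank K E L
  refine ⟨finrank K E, Nat.mem_properDivisors.2 ⟨Dvd.intro _ hEL, ?_⟩, ?_⟩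
  · refine lt_of_le_of_ne (Nat.le_of_dvd finrank_pos (Dvd.intro _ hEL)) fun h => hE ?_
    exact IntermediateField.eq_of_le_of_finrank_le le_top
      (by rw [IntermediateField.finrank_top', h])
  · have hcard : Nat.card Eˣ = Nat.card K ^ finrank K E - 1 := by
      rw [Nat.card_units, Module.natCard_eq_pow_finrank (K := K)]
    refine MonoidHom.ext fun x => ?_
    simp [← map_pow, ← hcard, pow_card_eq_one']

theorem card_monoidHom_units_complex_eq_geomSum_mul :
    Nat.card (Lˣ →* ℂˣ) =
      (∑ i ∈ range (finrank K L), Nat.card K ^ i) * (Nat.card K - 1) := by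
  have : Finite K := Finite.of_injective _ (algebraMap K L).injective
  rw [card_monoidHom_units_complex, Nat.card_units, Module.natCard_eq_pow_finrank (K := K),
    geom_sum_mul_of_one_le Finite.card_pos]

theorem geomSum_le_card_isGeneralPosition_add (χ : Kˣ →* ℂˣ) :
    ∑ i ∈ range (finrank K L), Nat.card K ^ i ≤
      Nat.card {θ : Lˣ →* ℂˣ // IsGeneralPosition K θ ∧ charRestrict K θ = χ} +
        finrank K L * (finrank K L * ∑ i ∈ range (finrank K L - 1), Nat.card K ^ i) := by
  classical
  have := Fintype.ofFinite (Lˣ →* ℂˣ)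
  have : Finite K := Finite.of_injective _ (algebraMap K L).injective
  set m := finrank K L
  set q := Nat.card K
  set d := ∑ i ∈ range m, q ^ i
  set ψ := χ.comp (Units.map (Algebra.norm K : L →* K))
  have hq : 1 ≤ q := Finite.card_pos
  have hcard : Fintype.card (Lˣ →* ℂˣ) = d * (q - 1) := by
    rw [← Nat.card_eq_fintype_card, card_monoidHom_units_complex_eq_geomSum_mul (K := K)]
  have hψ : ψ ^ (q - 1) = 1 := by
    refine MonoidHom.ext fun x => ?_
    rw [MonoidHom.pow_apply, MonoidHom.one_apply, MonoidHom.comp_apply, ← map_pow,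
      show q - 1 = Nat.card Kˣ from (Nat.card_units K).symm, pow_card_eq_one', map_one]
  have hcover : ({θ | θ ^ d = ψ} : Finset (Lˣ →* ℂˣ)) ⊆
      ({θ | IsGeneralPosition K θ ∧ charRestrict K θ = χ} : Finset _) ∪
        m.properDivisors.biUnion fun e => {θ | θ ^ d = ψ ∧ θ ^ (q ^ e - 1) = 1} := by
    intro θ
    simp only [mem_filter, mem_univ, true_and, mem_union, mem_biUnion]
    intro hθ
    by_cases hgp : IsGeneralPosition K θ
    · exact Or.inl ⟨hgp, charRestrict_eq_iff.2 hθ⟩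
    · obtain ⟨e, he, h⟩ := exists_pow_eq_one_of_not_isGeneralPosition hgp
      exact Or.inr ⟨e, he, hθ, h⟩
  rw [Nat.card_eq_fintype_card, Fintype.card_subtype, ← IsCyclic.card_pow_eq hcard hψ]
  refine (card_le_card hcover).trans ((card_union_le _ _).trans (Nat.add_le_add_left ?_ _))
  calc _ ≤ ∑ e ∈ m.properDivisors, #{θ | θ ^ d = ψ ∧ θ ^ (q ^ e - 1) = 1} := card_biUnion_le
    _ ≤ ∑ e ∈ m.properDivisors, m * ∑ i ∈ range (m - 1), q ^ i :=
        sum_le_sum fun e he => (IsCyclic.card_pow_eq_and_pow_eq_one_le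
          (sum_pos (fun i _ => by positivity) (nonempty_range_iff.2 finrank_pos.ne')) ψ _).trans
            (Nat.gcd_geomSum_pow_sub_one_le hq he)
    _ ≤ m * (m * ∑ i ∈ range (m - 1), q ^ i) := by
        rw [sum_const, smul_eq_mul]
        refine Nat.mul_le_mul_right _ ((card_le_card fun e he => ?_).trans (card_range m).le)
        exact mem_range.2 (Nat.mem_properDivisors.1 he).2

theorem le_two_mul_card_isGeneralPosition (hm : 2 ≤ finrank K L)
    (hq : 2 * finrank K L ^ 2 < Nat.card K) (χ : Kˣ →* ℂˣ) :
    Nat.card K ≤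
      2 * Nat.card {θ : Lˣ →* ℂˣ // IsGeneralPosition K θ ∧ charRestrict K θ = χ} := by
  have hcount := geomSum_le_card_isGeneralPosition_add (L := L) χ
  set m := finrank K L
  set q := Nat.card K
  set d' := ∑ i ∈ range (m - 1), q ^ i
  have hsplit : ∑ i ∈ range m, q ^ i = d' + q ^ (m - 1) := by
    rw [← sum_range_succ, Nat.sub_add_cancel (by omega : 1 ≤ m)]
  have hd' : d' * (q - 1) + 1 = q ^ (m - 1) := by
    rw [geom_sum_mul_of_one_le (by omega)]
    exact Nat.sub_add_cancel (Nat.one_le_pow _ _ (by omega))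
  have hsmall : 2 * (m * (m * d')) ≤ d' * (q - 1) :=
    calc 2 * (m * (m * d')) = 2 * m ^ 2 * d' := by ring
      _ ≤ (q - 1) * d' := Nat.mul_le_mul_right _ (by omega)
      _ = d' * (q - 1) := mul_comm _ _
  have hqq : q ≤ q ^ (m - 1) := Nat.le_self_pow (by omega) q
  omega

end FiniteField

theorem small_proportion_of_bounded_degree_general_position_general
    (m A : ℕ) (hm : 2 ≤ m) (ε : ℝ) (hε : 0 < ε) :
    ∃ Q₀ : ℕ, 1 ≤ Q₀ ∧
      ∀ (K L : Type) [Field K] [Field L] [Fintype K] [Fintype L] [Algebra K L],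
        Q₀ ≤ Fintype.card K → Module.finrank K L = m →
        ∀ χ₀ : Kˣ →* ℂˣ,
          (Nat.card {θ : Lˣ →* ℂˣ //
              IsGeneralPosition K θ ∧ charRestrict K θ = χ₀ ∧ charDegree θ ≤ m * A} : ℝ) ≤
            ε * (Nat.card {θ : Lˣ →* ℂˣ //
              IsGeneralPosition K θ ∧ charRestrict K θ = χ₀} : ℝ) := by
  set C := (2 * (m * A))!
  refine ⟨max (2 * m ^ 2 + 1) ⌈2 * C / ε⌉₊, le_max_of_le_left (by omega), ?_⟩
  intro K L _ _ _ _ _ hq hrank χ₀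
  rw [← Nat.card_eq_fintype_card, max_le_iff, Nat.ceil_le, div_le_iff₀ hε] at hq
  have hden := le_two_mul_card_isGeneralPosition (K := K) (L := L) (hrank ▸ hm)
    (by rw [hrank]; omega) χ₀
  calc _ ≤ (C : ℝ) := Nat.cast_le.2 <| (Nat.card_le_card_of_injective _
          (Subtype.impEmbedding _ _ fun _ h => h.2.2).injective).trans
            (card_charDegree_le_le_factorial _)
    _ ≤ ε * (Nat.card K / 2) := by linarith [hq.2]
    _ ≤ ε * _ := by
        gcongr
        rw [div_le_iff₀ two_pos, mul_comm]
        exact_mod_cast hden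

/-- Fix integers `m ≥ 2` and `A ≥ 1` and a real `ε > 0`.  There exists `Q₀ ≥ 1` such that
for all finite fields `K ⊆ L` with `|K| = q ≥ Q₀` and `[L : K] = m`, and every character
`χ₀` of `Kˣ`: the number of characters `θ` of `Lˣ` in general position with
`θ|_{Kˣ} = χ₀` and `[ℚ(θ) : ℚ] ≤ m·A` is at most `ε` times the number of characters `θ`
of `Lˣ` in general position with `θ|_{Kˣ} = χ₀`. -/
theorem small_proportion_of_bounded_degree_general_position
    (m A : ℕ) (hm : 2 ≤ m) (hA : 1 ≤ A) (ε : ℝ) (hε : 0 < ε) :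
    ∃ Q₀ : ℕ, 1 ≤ Q₀ ∧
      ∀ (K L : Type) [Field K] [Field L] [Fintype K] [Fintype L] [Algebra K L],
        Q₀ ≤ Fintype.card K → Module.finrank K L = m →
        ∀ χ₀ : Kˣ →* ℂˣ,
          (Nat.card {θ : Lˣ →* ℂˣ //
              IsGeneralPosition K θ ∧ charRestrict K θ = χ₀ ∧ charDegree θ ≤ m * A} : ℝ) ≤
            ε * (Nat.card {θ : Lˣ →* ℂˣ //
              IsGeneralPosition K θ ∧ charRestrict K θ = χ₀} : ℝ) :=
  small_proportion_of_bounded_degree_general_position_general m A hm ε hε
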